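/- arXiv:2104.05515 — 6 statements merged into one kernel-verified Lean document; each statement's English description precedes it below -/
import Mathlib

section
/- Let A1, ..., A_{n+1} be affinely independent points in Euclidean space ℝ^n and let P, Q be points with barycentric coordinates (p_1,...,p_{n+1}) and (q_1,...,q_{n+1}) with respect to (A1,...,A_{n+1}) (so Σp_i = Σq_i = 1, P = Σ p_i A_i, Q = Σ q_i A_i). Then the squared Euclidean distance satisfies dist(P,Q)^2 = - Σ_{1 ≤ i < j ≤ n+1} dist(A_i,A_j)^2 (p_i - q_i)(p_j - q_j). -/
/-! Since `w₁ - w₂` sums to zero, expanding `|p i - p j|²` gives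
`|∑ (w₁ - w₂) i • p i|² = -½ ∑ i j, (w₁ - w₂) i (w₁ - w₂) j |p i - p j|²`; the summand is
symmetric and vanishes on the diagonal, so the full double sum is twice the sum over `i < j`. -/

open Finset

theorem sum_sum_eq_two_mul_sum_sum_Ioi {α R : Type*} [LinearOrder α] [Fintype α]
    [LocallyFiniteOrderTop α] [LocallyFiniteOrderBot α] [NonAssocSemiring R]
    (f : α → α → R) (hsymm : ∀ i j, f i j = f j i) (hdiag : ∀ i, f i i = 0) :
    ∑ i, ∑ j, f i j = 2 * ∑ i, ∑ j ∈ Ioi i, f i j := by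
  have hoff : ∀ i, ∑ j, f j i = ∑ j ∈ {i}ᶜ, f j i := fun i => by
    rw [← sum_compl_add_sum {i}, sum_singleton, hdiag, add_zero]
  rw [sum_comm, sum_congr rfl fun i _ => hoff i, ← sum_sum_Ioi_add_eq_sum_sum_off_diag,
    mul_sum]
  refine sum_congr rfl fun i _ => ?_
  rw [mul_sum]
  exact sum_congr rfl fun j _ => by rw [hsymm j i, two_mul]

theorem EuclideanGeometry.dist_affineCombination_sq {ι V P : Type*} [LinearOrder ι]
    [Fintype ι] [LocallyFiniteOrderTop ι] [LocallyFiniteOrderBot ι]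
    [NormedAddCommGroup V] [InnerProductSpace ℝ V] [MetricSpace P] [NormedAddTorsor V P]
    (p : ι → P) {w₁ w₂ : ι → ℝ} (h₁ : ∑ i, w₁ i = 1) (h₂ : ∑ i, w₂ i = 1) :
    dist (univ.affineCombination ℝ p w₁) (univ.affineCombination ℝ p w₂) ^ 2 =
      -∑ i, ∑ j ∈ Ioi i, dist (p i) (p j) ^ 2 * (w₁ i - w₂ i) * (w₁ j - w₂ j) := by
  have hpairs := sum_sum_eq_two_mul_sum_sum_Ioi
    (fun i j => dist (p i) (p j) ^ 2 * (w₁ i - w₂ i) * (w₁ j - w₂ j))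
    (fun i j => by simp only [dist_comm (p i)]; ring) (fun i => by simp)
  have hterms : ∑ i, ∑ j, (w₁ - w₂) i * (w₁ - w₂) j * (dist (p i) (p j) * dist (p i) (p j)) =
      ∑ i, ∑ j, dist (p i) (p j) ^ 2 * (w₁ i - w₂ i) * (w₁ j - w₂ j) :=
    sum_congr rfl fun i _ => sum_congr rfl fun j _ => by simp only [Pi.sub_apply]; ring
  rw [sq, EuclideanGeometry.dist_affineCombination p h₁ h₂, hterms, hpairs]
  ring

theorem barycentric_distance_formula_general (n : ℕ)
    (A : Fin (n + 1) → EuclideanSpace ℝ (Fin n))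
    (p q : Fin (n + 1) → ℝ)
    (hp : ∑ i, p i = 1) (hq : ∑ i, q i = 1)
    (P Q : EuclideanSpace ℝ (Fin n))
    (hP : P = ∑ i, p i • A i) (hQ : Q = ∑ i, q i • A i) :
    dist P Q ^ 2 =
      -∑ i, ∑ j ∈ Finset.univ.filter (fun j => i < j),
        dist (A i) (A j) ^ 2 * (p i - q i) * (p j - q j) := by
  rw [hP, hQ, ← affineCombination_eq_linear_combination _ _ _ hp,
    ← affineCombination_eq_linear_combination _ _ _ hq,
    EuclideanGeometry.dist_affineCombination_sq A hp hq]
  simp only [filter_lt_eq_Ioi]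

theorem barycentric_distance_formula (n : ℕ) (hn : 1 < n)
    (A : Fin (n + 1) → EuclideanSpace ℝ (Fin n)) (hA : AffineIndependent ℝ A)
    (p q : Fin (n + 1) → ℝ)
    (hp : ∑ i, p i = 1) (hq : ∑ i, q i = 1)
    (P Q : EuclideanSpace ℝ (Fin n))
    (hP : P = ∑ i, p i • A i) (hQ : Q = ∑ i, q i • A i) :
    dist P Q ^ 2 =
      -∑ i, ∑ j ∈ Finset.univ.filter (fun j => i < j),
        dist (A i) (A j) ^ 2 * (p i - q i) * (p j - q j) :=
  barycentric_distance_formula_general n A p q hp hq P Q hP hQ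
end

section
/- Let A1, A2, A3, A4 be four points in ℝ³ with pairwise distances d12 = 13, d13 = 11, d14 = 9, d23 = 12, d24 = 5, d34 = 11. Then there is no point R in ℝ³ satisfying dist(A1,R) : dist(A2,R) : dist(A3,R) : dist(A4,R) = 1/a1² : 1/a2² : 1/a3² : 1/a4², where a_i is the area of the face opposite A_i; i.e., this tetrahedron has no isodynamic point in the sense of a common point of all Apollonian spheres. -/
/-- Area of a triangle with side lengths `a`, `b`, `c`, by Heron's formula. -/
noncomputable def heronArea (a b c : ℝ) : ℝ :=
  Real.sqrt (((a + b + c) / 2) * ((a + b + c) / 2 - a) *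
    ((a + b + c) / 2 - b) * ((a + b + c) / 2 - c))

/-- The tetrahedron with edge lengths `13, 11, 9, 12, 5, 11` has no isodynamic
point: no point `R` satisfies
`dist A₁ R : dist A₂ R : dist A₃ R : dist A₄ R = 1/a₁² : 1/a₂² : 1/a₃² : 1/a₄²`,
where `aᵢ` is the area of the facet opposite `Aᵢ`. -/
theorem no_isodynamic_point_of_tetrahedron
    (A₁ A₂ A₃ A₄ : EuclideanSpace ℝ (Fin 3))
    (h12 : dist A₁ A₂ = 13) (h13 : dist A₁ A₃ = 11) (h14 : dist A₁ A₄ = 9)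
    (h23 : dist A₂ A₃ = 12) (h24 : dist A₂ A₄ = 5) (h34 : dist A₃ A₄ = 11)
    (a₁ a₂ a₃ a₄ : ℝ)
    (ha₁ : a₁ = heronArea (dist A₂ A₃) (dist A₂ A₄) (dist A₃ A₄))
    (ha₂ : a₂ = heronArea (dist A₁ A₃) (dist A₁ A₄) (dist A₃ A₄))
    (ha₃ : a₃ = heronArea (dist A₁ A₂) (dist A₁ A₄) (dist A₂ A₄))
    (ha₄ : a₄ = heronArea (dist A₁ A₂) (dist A₁ A₃) (dist A₂ A₃)) :
    ¬ ∃ R : EuclideanSpace ℝ (Fin 3),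
        dist A₁ R * a₁ ^ 2 = dist A₂ R * a₂ ^ 2 ∧
        dist A₂ R * a₂ ^ 2 = dist A₃ R * a₃ ^ 2 ∧
        dist A₃ R * a₃ ^ 2 = dist A₄ R * a₄ ^ 2 := by
  rw [h23, h24, h34] at ha₁
  rw [h12, h14, h24] at ha₃
  rw [h12, h13, h23] at ha₄
  have ha1sq : a₁ ^ 2 = 756 := by
    rw [ha₁, heronArea, sq, Real.mul_self_sqrt (by norm_num)]; norm_num
  have ha3sq : a₃ ^ 2 = 4131 / 16 := by
    rw [ha₃, heronArea, sq, Real.mul_self_sqrt (by norm_num)]; norm_num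
  have ha4sq : a₄ ^ 2 = 3780 := by
    rw [ha₄, heronArea, sq, Real.mul_self_sqrt (by norm_num)]; norm_num
  rintro ⟨R, e1, e2, e3⟩
  rw [ha1sq] at e1
  rw [ha3sq] at e2 e3
  rw [ha4sq] at e3
  have tri14 : (9 : ℝ) ≤ dist A₁ R + dist A₄ R := by
    calc (9 : ℝ) = dist A₁ A₄ := h14.symm
    _ ≤ dist A₁ R + dist R A₄ := dist_triangle _ _ _
    _ = dist A₁ R + dist A₄ R := by rw [dist_comm R A₄]
  have tri34 : dist A₃ R ≤ 11 + dist A₄ R := by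
    calc dist A₃ R ≤ dist A₃ A₄ + dist A₄ R := dist_triangle _ _ _
    _ = 11 + dist A₄ R := by rw [h34]
  linarith
end

section
/- Let A1, ..., A_{n+1} be affinely independent points in ℝ^n, let P be a point with barycentric coordinates (p_1,...,p_{n+1}), Σ p_i = 1, all p_i ≠ 0, and let S be the sphere of radius 1 centered at P. Let A_i* denote the pole of the hyperplane h_i (the sideplane opposite A_i) with respect to S, i.e., the inverse of the foot of the perpendicular from P to h_i. Then Σ_i p_i A_i* = P; in other words, P has the same barycentric coordinates with respect to the polar simplex A_1*...A_{n+1}* as with respect to A_1...A_{n+1}. -/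
/-!
Put `aⱼ = Aⱼ - P` and `uᵢ = Aᵢ* - P`. Polarity says `⟪aⱼ, uᵢ⟫ = 1` whenever `j ≠ i`, and
`∑ pⱼ aⱼ = 0` because `P` is the barycenter. Pairing this relation with `uᵢ` gives
`pᵢ ⟪aᵢ, uᵢ⟫ = pᵢ - 1`, and then `⟪aⱼ, ∑ pᵢ uᵢ⟫ = (1 - pⱼ) + (pⱼ - 1) = 0` for every `j`.
Since the `aⱼ` span the space, `∑ pᵢ uᵢ = ∑ pᵢ Aᵢ* - P` vanishes.
-/

open Finset

theorem sum_mul_eq_of_forall_ne_eq_one {ι : Type*} [Fintype ι] [DecidableEq ι] {p f : ι → ℝ}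
    (hsum : ∑ j, p j = 1) {i : ι} (hf : ∀ j, j ≠ i → f j = 1) :
    ∑ j, p j * f j = p i * f i + (1 - p i) := by
  rw [← add_sum_erase _ _ (mem_univ i),
    sum_congr rfl fun j hj => by rw [hf j (ne_of_mem_erase hj), mul_one],
    sum_erase_eq_sub (mem_univ i), hsum]

theorem sum_smul_sub_eq_of_sum_eq_one {ι V : Type*} [Fintype ι] [AddCommGroup V] [Module ℝ V]
    {p : ι → ℝ} (hsum : ∑ i, p i = 1) (x : ι → V) (P : V) :
    ∑ i, p i • (x i - P) = ∑ i, p i • x i - P := by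
  simp only [smul_sub, sum_sub_distrib, ← sum_smul, hsum, one_smul]

theorem eq_zero_of_forall_inner_vsub_eq_zero {ι V Pt : Type*} [NormedAddCommGroup V]
    [InnerProductSpace ℝ V] [AddTorsor V Pt] {A : ι → Pt}
    (hA : affineSpan ℝ (Set.range A) = ⊤) (P : Pt) {v : V}
    (hv : ∀ j, inner ℝ (A j -ᵥ P) v = 0) : v = 0 := by
  have hle : vectorSpan ℝ (Set.range A) ≤ (ℝ ∙ v)ᗮ := by
    rw [vectorSpan_def, Submodule.span_le]
    rintro _ ⟨_, ⟨j, rfl⟩, _, ⟨k, rfl⟩, rfl⟩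
    rw [SetLike.mem_coe, Submodule.mem_orthogonal_singleton_iff_inner_left]
    dsimp only
    rw [← vsub_sub_vsub_cancel_right (A j) (A k) P, inner_sub_left, hv, hv, sub_zero]
  rwa [AffineSubspace.vectorSpan_eq_top_of_affineSpan_eq_top, top_le_iff,
    Submodule.orthogonal_eq_top_iff, Submodule.span_singleton_eq_bot] at hle
  exact hA

section PolarFrame

variable {ι V : Type*} [Fintype ι] [DecidableEq ι] [NormedAddCommGroup V] [InnerProductSpace ℝ V]
  {p : ι → ℝ} {a u : ι → V}

theorem mul_inner_diag_eq (hsum : ∑ j, p j = 1) (hbary : ∑ j, p j • a j = 0)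
    (hinner : ∀ i j, j ≠ i → inner ℝ (a j) (u i) = 1) (i : ι) :
    p i * inner ℝ (a i) (u i) = p i - 1 := by
  have h := congrArg (fun x => inner ℝ x (u i)) hbary
  simp only [sum_inner, real_inner_smul_left, inner_zero_left] at h
  rw [sum_mul_eq_of_forall_ne_eq_one hsum (hinner i)] at h
  linarith

theorem inner_sum_smul_eq_zero (hsum : ∑ j, p j = 1) (hbary : ∑ j, p j • a j = 0)
    (hinner : ∀ i j, j ≠ i → inner ℝ (a j) (u i) = 1) (j : ι) :
    inner ℝ (a j) (∑ i, p i • u i) = 0 := by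
  simp only [inner_sum, real_inner_smul_right]
  rw [sum_mul_eq_of_forall_ne_eq_one hsum fun i hij => hinner i j (Ne.symm hij),
    mul_inner_diag_eq hsum hbary hinner j]
  ring

end PolarFrame

theorem polar_simplex_same_barycentrics_general (n : ℕ)
    (A : Fin (n + 1) → EuclideanSpace ℝ (Fin n)) (hA : AffineIndependent ℝ A)
    (p : Fin (n + 1) → ℝ) (hsum : ∑ i, p i = 1)
    (P : EuclideanSpace ℝ (Fin n)) (hP : P = ∑ i, p i • A i)
    (Astar : Fin (n + 1) → EuclideanSpace ℝ (Fin n))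
    (hpolar : ∀ i, (affineSpan ℝ (A '' {i}ᶜ) : Set (EuclideanSpace ℝ (Fin n))) =
      {R | inner ℝ (R - P) (Astar i - P) = (1 : ℝ)}) :
    ∑ i, p i • Astar i = P := by
  have hinner : ∀ i j, j ≠ i → inner ℝ (A j - P) (Astar i - P) = (1 : ℝ) := fun i j hji => by
    have hmem : A j ∈ (affineSpan ℝ (A '' {i}ᶜ) : Set (EuclideanSpace ℝ (Fin n))) :=
      subset_affineSpan ℝ _ ⟨j, hji, rfl⟩
    rwa [hpolar i] at hmem
  have hbary : ∑ j, p j • (A j - P) = 0 := by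
    rw [sum_smul_sub_eq_of_sum_eq_one hsum, ← hP, sub_self]
  have hspan : affineSpan ℝ (Set.range A) = ⊤ :=
    hA.affineSpan_eq_top_iff_card_eq_finrank_add_one.mpr (by simp)
  rw [← sub_eq_zero, ← sum_smul_sub_eq_of_sum_eq_one hsum]
  exact eq_zero_of_forall_inner_vsub_eq_zero hspan P (inner_sum_smul_eq_zero hsum hbary hinner)

/-- If `Aᵢ*` is the pole, with respect to the unit sphere centered at `P`, of
the sideplane `hᵢ` opposite `Aᵢ`, then `P` has the same barycentric coordinates
with respect to the polar simplex `A₁* ⋯ A_{n+1}*` as with respect to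
`A₁ ⋯ A_{n+1}`: `∑ pᵢ • Aᵢ* = P`. -/
theorem polar_simplex_same_barycentrics (n : ℕ) (hn : 1 < n)
    (A : Fin (n + 1) → EuclideanSpace ℝ (Fin n)) (hA : AffineIndependent ℝ A)
    (p : Fin (n + 1) → ℝ) (hp : ∀ i, p i ≠ 0) (hsum : ∑ i, p i = 1)
    (P : EuclideanSpace ℝ (Fin n)) (hP : P = ∑ i, p i • A i)
    (Astar : Fin (n + 1) → EuclideanSpace ℝ (Fin n))
    (hpolar : ∀ i, (affineSpan ℝ (A '' {i}ᶜ) : Set (EuclideanSpace ℝ (Fin n))) =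
      {R | inner ℝ (R - P) (Astar i - P) = (1 : ℝ)}) :
    ∑ i, p i • Astar i = P :=
  polar_simplex_same_barycentrics_general n A hA p hsum P hP Astar hpolar
end

section
/- Let A1, ..., A_{n+1} be affinely independent points in ℝ^n, none equal, and let F be a point distinct from all A_i minimizing the function f(P) = Σ_i dist(P, A_i). Then F is a fixed point of the Weiszfeld map, i.e., F = (Σ_i A_i / dist(F, A_i)) / (Σ_i 1/dist(F, A_i)). -/
/-!
Away from `aᵢ`, `y ↦ dist y aᵢ` is differentiable with gradient the unit vector `(y - aᵢ) / dist y aᵢ`.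
At a minimiser distinct from every `aᵢ` the gradients sum to zero, `∑ (x - aᵢ) / dist x aᵢ = 0`, and solving this
linear equation for `x` is exactly the fixed-point equation of the Weiszfeld map.
-/

open scoped RealInnerProductSpace
open Finset

theorem Finset.eq_centerMass_of_sum_smul_sub_eq_zero {ι R E : Type*} [Field R] [AddCommGroup E]
    [Module R E] {t : Finset ι} {w : ι → R} {z : ι → E} {x : E} (hw : ∑ i ∈ t, w i ≠ 0)
    (h : ∑ i ∈ t, w i • (x - z i) = 0) : x = t.centerMass w z := by
  simp only [smul_sub, sum_sub_distrib, ← sum_smul, sub_eq_zero] at h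
  rw [centerMass, ← h, inv_smul_smul₀ hw]

section InnerProductSpace

variable {E : Type*} [NormedAddCommGroup E] [InnerProductSpace ℝ E]

theorem hasFDerivAt_dist_left {a x : E} (hx : x ≠ a) :
    HasFDerivAt (dist · a) ((dist x a)⁻¹ • innerSL ℝ (x - a)) x := by
  have hsq : HasFDerivAt (fun y => ‖y - a‖ ^ 2) (2 • innerSL ℝ (x - a)) x := by
    simpa using ((hasFDerivAt_id x).sub_const a).norm_sq
  convert hsq.sqrt (by simpa [sub_eq_zero] using hx) using 1
  · ext y; simp [dist_eq_norm]
  · rw [Real.sqrt_sq (norm_nonneg _), dist_eq_norm]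
    ext v
    simp only [smul_apply, coe_innerSL_apply, smul_eq_mul, one_div,
      mul_inv_rev, nsmul_eq_mul, Nat.cast_ofNat]
    field_simp

theorem IsLocalMin.sum_inv_dist_smul_sub_eq_zero {ι : Type*} [Fintype ι] {a : ι → E} {x : E}
    (hx : ∀ i, x ≠ a i) (h : IsLocalMin (fun y => ∑ i, dist y (a i)) x) :
    ∑ i, (dist x (a i))⁻¹ • (x - a i) = 0 := by
  have hderiv : HasFDerivAt (fun y => ∑ i, dist y (a i))
      (innerSL ℝ (∑ i, (dist x (a i))⁻¹ • (x - a i))) x := by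
    simpa only [map_sum, map_smul] using
      HasFDerivAt.fun_sum fun i _ => hasFDerivAt_dist_left (hx i)
  rw [← norm_eq_zero, ← innerSL_apply_norm ℝ, h.hasFDerivAt_eq_zero hderiv, norm_zero]

theorem IsLocalMin.eq_centerMass_inv_dist {ι : Type*} [Fintype ι] [Nonempty ι] {a : ι → E} {x : E}
    (hx : ∀ i, x ≠ a i) (h : IsLocalMin (fun y => ∑ i, dist y (a i)) x) :
    x = univ.centerMass (fun i => (dist x (a i))⁻¹) a :=
  eq_centerMass_of_sum_smul_sub_eq_zero
    (sum_pos (fun i _ => inv_pos.2 (dist_pos.2 (hx i))) univ_nonempty).ne'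
    (h.sum_inv_dist_smul_sub_eq_zero hx)

end InnerProductSpace

theorem fermat_point_weiszfeld_fixed_general (n : ℕ)
    (A : Fin (n + 1) → EuclideanSpace ℝ (Fin n))
    (F : EuclideanSpace ℝ (Fin n)) (hF : ∀ i, F ≠ A i)
    (hmin : ∀ Q : EuclideanSpace ℝ (Fin n),
      ∑ i, dist F (A i) ≤ ∑ i, dist Q (A i)) :
    F = (∑ i, (dist F (A i))⁻¹)⁻¹ • ∑ i, (dist F (A i))⁻¹ • A i :=
  -- the right-hand side is `Finset.centerMass` unfolded
  IsLocalMin.eq_centerMass_inv_dist hF (.of_forall hmin)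

/-- A minimizer of `P ↦ ∑ dist P Aᵢ` that is not a vertex is a fixed point of
the Weiszfeld map. -/
theorem fermat_point_weiszfeld_fixed (n : ℕ) (hn : 1 < n)
    (A : Fin (n + 1) → EuclideanSpace ℝ (Fin n)) (hA : AffineIndependent ℝ A)
    (F : EuclideanSpace ℝ (Fin n)) (hF : ∀ i, F ≠ A i)
    (hmin : ∀ Q : EuclideanSpace ℝ (Fin n),
      ∑ i, dist F (A i) ≤ ∑ i, dist Q (A i)) :
    F = (∑ i, (dist F (A i))⁻¹)⁻¹ • ∑ i, (dist F (A i))⁻¹ • A i :=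
  fermat_point_weiszfeld_fixed_general n A F hF hmin
end

section
/- Let A1, A2, A3 be a triangle in the Euclidean plane and let P be an interior point such that the three angles ∠A1 P A2, ∠A2 P A3, ∠A3 P A1 are all equal (hence each equal to 2π/3). Then P minimizes f(Q) = dist(Q,A1) + dist(Q,A2) + dist(Q,A3); i.e., P is the Fermat–Torricelli point of the triangle. -/
open EuclideanGeometry

open RealInnerProductSpace in
/-- Three unit vectors with equal pairwise inner products admitting a
positive vanishing combination must sum to zero. -/
lemma unit_sum_zero {E : Type*} [NormedAddCommGroup E] [InnerProductSpace ℝ E]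
    (u₁ u₂ u₃ : E) (h₁ : ‖u₁‖ = 1) (h₂ : ‖u₂‖ = 1) (h₃ : ‖u₃‖ = 1)
    (c : ℝ) (h12 : ⟪u₁, u₂⟫ = c) (h23 : ⟪u₂, u₃⟫ = c) (h31 : ⟪u₃, u₁⟫ = c)
    (a₁ a₂ a₃ : ℝ) (ha₁ : 0 < a₁) (ha₂ : 0 < a₂) (ha₃ : 0 < a₃)
    (hsum : a₁ • u₁ + a₂ • u₂ + a₃ • u₃ = 0) :
    u₁ + u₂ + u₃ = 0 := by
  have n1 : ⟪u₁, u₁⟫ = 1 := by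
    rw [real_inner_self_eq_norm_mul_norm, h₁]; ring
  have n2 : ⟪u₂, u₂⟫ = 1 := by
    rw [real_inner_self_eq_norm_mul_norm, h₂]; ring
  have n3 : ⟪u₃, u₃⟫ = 1 := by
    rw [real_inner_self_eq_norm_mul_norm, h₃]; ring
  have h21 : ⟪u₂, u₁⟫ = c := by rw [real_inner_comm]; exact h12
  have h32 : ⟪u₃, u₂⟫ = c := by rw [real_inner_comm]; exact h23
  have h13 : ⟪u₁, u₃⟫ = c := by rw [real_inner_comm]; exact h31
  have e : ∀ w : E, ⟪a₁ • u₁ + a₂ • u₂ + a₃ • u₃, w⟫ = 0 := by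
    intro w; rw [hsum, inner_zero_left]
  have e1 := e u₁
  have e2 := e u₂
  have e3 := e u₃
  simp only [inner_add_left, real_inner_smul_left, n1, n2, n3,
    h12, h23, h31, h21, h32, h13] at e1 e2 e3
  have hc : c = -(1/2) := by
    have hS : 0 < a₁ + a₂ + a₃ := by linarith
    have : (a₁ + a₂ + a₃) * (1 + 2 * c) = 0 := by linarith
    have := mul_eq_zero.mp this
    rcases this with h | h
    · exact absurd h (ne_of_gt hS)
    · linarith
  have : ⟪u₁ + u₂ + u₃, u₁ + u₂ + u₃⟫ = 0 := by
    simp only [inner_add_left, inner_add_right, n1, n2, n3,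
      h12, h23, h31, h21, h32, h13, hc]
    ring
  exact inner_self_eq_zero.mp this

open RealInnerProductSpace in
/-- An interior point of a triangle at which the three sides subtend equal
angles is the Fermat–Torricelli point: it minimizes the sum of distances to the
vertices. -/
theorem equal_angles_interior_point_is_fermat
    (A₁ A₂ A₃ : EuclideanSpace ℝ (Fin 2))
    (hA : AffineIndependent ℝ ![A₁, A₂, A₃])
    (P : EuclideanSpace ℝ (Fin 2))
    (hint : P ∈ interior (convexHull ℝ {A₁, A₂, A₃}))
    (hang₁ : ∠ A₁ P A₂ = ∠ A₂ P A₃) (hang₂ : ∠ A₂ P A₃ = ∠ A₃ P A₁) :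
    ∀ Q : EuclideanSpace ℝ (Fin 2),
      dist P A₁ + dist P A₂ + dist P A₃ ≤ dist Q A₁ + dist Q A₂ + dist Q A₃ := by
  classical
  -- build an affine basis from the triangle
  have hspan : affineSpan ℝ (Set.range ![A₁, A₂, A₃]) = ⊤ := by
    rw [hA.affineSpan_eq_top_iff_card_eq_finrank_add_one]
    simp [finrank_euclideanSpace]
  let b : AffineBasis (Fin 3) ℝ (EuclideanSpace ℝ (Fin 2)) := ⟨![A₁, A₂, A₃], hA, hspan⟩
  have hrange : Set.range ⇑b = ({A₁, A₂, A₃} : Set (EuclideanSpace ℝ (Fin 2))) := by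
    show Set.range ![A₁, A₂, A₃] = _
    ext x
    constructor
    · rintro ⟨i, rfl⟩
      fin_cases i <;> simp
    · rintro (rfl | rfl | rfl)
      exacts [⟨0, rfl⟩, ⟨1, rfl⟩, ⟨2, rfl⟩]
  have hw : ∀ i, 0 < b.coord i P := by
    have := b.interior_convexHull
    rw [hrange] at this
    rw [this] at hint
    exact hint
  set w : Fin 3 → ℝ := fun i => b.coord i P with hwdef
  have hsum1 : w 0 + w 1 + w 2 = 1 := by
    have := b.sum_coord_apply_eq_one P
    rw [Fin.sum_univ_three] at this
    exact this
  have hcomb : w 0 • A₁ + w 1 • A₂ + w 2 • A₃ = P := by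
    have := b.linear_combination_coord_eq_self P
    rw [Fin.sum_univ_three] at this
    exact this
  -- P is not a vertex
  have hb0 : b 0 = A₁ := rfl
  have hb1 : b 1 = A₂ := rfl
  have hb2 : b 2 = A₃ := rfl
  have hne : ∀ i : Fin 3, P ≠ b i := by
    intro i hP
    obtain ⟨j, hj⟩ : ∃ j : Fin 3, j ≠ i := by
      fin_cases i
      · exact ⟨1, by decide⟩
      · exact ⟨0, by decide⟩
      · exact ⟨0, by decide⟩
    have := hw j
    rw [hP, b.coord_apply] at this
    simp [hj] at this
  have hne₁ : P ≠ A₁ := hne 0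
  have hne₂ : P ≠ A₂ := hne 1
  have hne₃ : P ≠ A₃ := hne 2
  -- the vectors to the vertices
  set v₁ : EuclideanSpace ℝ (Fin 2) := A₁ - P with hv₁
  set v₂ : EuclideanSpace ℝ (Fin 2) := A₂ - P with hv₂
  set v₃ : EuclideanSpace ℝ (Fin 2) := A₃ - P with hv₃
  have hr₁ : (0:ℝ) < ‖v₁‖ := by
    rw [norm_pos_iff]; intro h; exact hne₁ (by rw [sub_eq_zero] at h; exact h.symm)
  have hr₂ : (0:ℝ) < ‖v₂‖ := by
    rw [norm_pos_iff]; intro h; exact hne₂ (by rw [sub_eq_zero] at h; exact h.symm)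
  have hr₃ : (0:ℝ) < ‖v₃‖ := by
    rw [norm_pos_iff]; intro h; exact hne₃ (by rw [sub_eq_zero] at h; exact h.symm)
  set u₁ : EuclideanSpace ℝ (Fin 2) := ‖v₁‖⁻¹ • v₁ with hu₁
  set u₂ : EuclideanSpace ℝ (Fin 2) := ‖v₂‖⁻¹ • v₂ with hu₂
  set u₃ : EuclideanSpace ℝ (Fin 2) := ‖v₃‖⁻¹ • v₃ with hu₃
  have hnu₁ : ‖u₁‖ = 1 := by
    rw [hu₁, norm_smul, norm_inv, norm_norm, inv_mul_cancel₀ (ne_of_gt hr₁)]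
  have hnu₂ : ‖u₂‖ = 1 := by
    rw [hu₂, norm_smul, norm_inv, norm_norm, inv_mul_cancel₀ (ne_of_gt hr₂)]
  have hnu₃ : ‖u₃‖ = 1 := by
    rw [hu₃, norm_smul, norm_inv, norm_norm, inv_mul_cancel₀ (ne_of_gt hr₃)]
  -- inner products of unit vectors equal cosines of the angles
  have hiu : ∀ (x y : EuclideanSpace ℝ (Fin 2)),
      ⟪‖x‖⁻¹ • x, ‖y‖⁻¹ • y⟫ = Real.cos (InnerProductGeometry.angle x y) := by
    intro x y
    rw [InnerProductGeometry.cos_angle, real_inner_smul_left, real_inner_smul_right]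
    rw [div_eq_mul_inv, mul_inv]
    ring
  have h1 : ∠ A₁ P A₂ = InnerProductGeometry.angle v₁ v₂ := rfl
  have h2 : ∠ A₂ P A₃ = InnerProductGeometry.angle v₂ v₃ := rfl
  have h3 : ∠ A₃ P A₁ = InnerProductGeometry.angle v₃ v₁ := rfl
  have hang₁' : ⟪u₁, u₂⟫ = ⟪u₂, u₃⟫ := by
    rw [hu₁, hu₂, hu₃, hiu, hiu]
    exact congrArg Real.cos (by rw [← h1, ← h2]; exact hang₁)
  have hang₂' : ⟪u₂, u₃⟫ = ⟪u₃, u₁⟫ := by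
    rw [hu₁, hu₂, hu₃, hiu, hiu]
    exact congrArg Real.cos (by rw [← h2, ← h3]; exact hang₂)
  -- the positive vanishing combination
  have hcomb' : (w 0 * ‖v₁‖) • u₁ + (w 1 * ‖v₂‖) • u₂ + (w 2 * ‖v₃‖) • u₃ = 0 := by
    have e1 : (w 0 * ‖v₁‖) • u₁ = w 0 • v₁ := by
      rw [hu₁, smul_smul, mul_assoc, mul_inv_cancel₀ (ne_of_gt hr₁), mul_one]
    have e2 : (w 1 * ‖v₂‖) • u₂ = w 1 • v₂ := by
      rw [hu₂, smul_smul, mul_assoc, mul_inv_cancel₀ (ne_of_gt hr₂), mul_one]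
    have e3 : (w 2 * ‖v₃‖) • u₃ = w 2 • v₃ := by
      rw [hu₃, smul_smul, mul_assoc, mul_inv_cancel₀ (ne_of_gt hr₃), mul_one]
    rw [e1, e2, e3, hv₁, hv₂, hv₃]
    have : w 0 • (A₁ - P) + w 1 • (A₂ - P) + w 2 • (A₃ - P)
        = (w 0 • A₁ + w 1 • A₂ + w 2 • A₃) - (w 0 + w 1 + w 2) • P := by
      simp only [smul_sub, add_smul]
      abel
    rw [this, hcomb, hsum1, one_smul, sub_self]
  have hzero : u₁ + u₂ + u₃ = 0 :=
    unit_sum_zero u₁ u₂ u₃ hnu₁ hnu₂ hnu₃ ⟪u₂, u₃⟫ hang₁' rfl hang₂'.symm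
      (w 0 * ‖v₁‖) (w 1 * ‖v₂‖) (w 2 * ‖v₃‖)
      (mul_pos (hw 0) hr₁) (mul_pos (hw 1) hr₂) (mul_pos (hw 2) hr₃) hcomb'
  -- the minimization
  intro Q
  have key : ∀ (A u : EuclideanSpace ℝ (Fin 2)), ‖u‖ = 1 →
      ⟪A - Q, u⟫ ≤ dist Q A := by
    intro A u hu
    calc ⟪A - Q, u⟫ ≤ ‖A - Q‖ * ‖u‖ := real_inner_le_norm _ _
    _ = dist Q A := by rw [hu, mul_one, dist_comm, dist_eq_norm]
  have hvu : ∀ (x : EuclideanSpace ℝ (Fin 2)), x ≠ 0 → ⟪x, ‖x‖⁻¹ • x⟫ = ‖x‖ := by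
    intro x hx
    rw [real_inner_smul_right, real_inner_self_eq_norm_mul_norm]
    field_simp
  have hPA₁ : dist P A₁ = ‖v₁‖ := by rw [dist_eq_norm, hv₁, ← norm_neg]; congr 1; abel
  have hPA₂ : dist P A₂ = ‖v₂‖ := by rw [dist_eq_norm, hv₂, ← norm_neg]; congr 1; abel
  have hPA₃ : dist P A₃ = ‖v₃‖ := by rw [dist_eq_norm, hv₃, ← norm_neg]; congr 1; abel
  have expand : ∀ (A : EuclideanSpace ℝ (Fin 2)) (u : EuclideanSpace ℝ (Fin 2)),
      ⟪A - Q, u⟫ = ⟪A - P, u⟫ + ⟪P - Q, u⟫ := by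
    intro A u
    rw [← inner_add_left]
    congr 1
    abel
  have k₁ := key A₁ u₁ hnu₁
  have k₂ := key A₂ u₂ hnu₂
  have k₃ := key A₃ u₃ hnu₃
  rw [expand A₁ u₁] at k₁
  rw [expand A₂ u₂] at k₂
  rw [expand A₃ u₃] at k₃
  have i₁ : ⟪A₁ - P, u₁⟫ = ‖v₁‖ := by
    rw [hu₁, ← hv₁]; exact hvu v₁ (by intro h; rw [h, norm_zero] at hr₁; linarith)
  have i₂ : ⟪A₂ - P, u₂⟫ = ‖v₂‖ := by
    rw [hu₂, ← hv₂]; exact hvu v₂ (by intro h; rw [h, norm_zero] at hr₂; linarith)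
  have i₃ : ⟪A₃ - P, u₃⟫ = ‖v₃‖ := by
    rw [hu₃, ← hv₃]; exact hvu v₃ (by intro h; rw [h, norm_zero] at hr₃; linarith)
  rw [i₁] at k₁; rw [i₂] at k₂; rw [i₃] at k₃
  have hsum0 : ⟪P - Q, u₁⟫ + ⟪P - Q, u₂⟫ + ⟪P - Q, u₃⟫ = 0 := by
    rw [← inner_add_right, ← inner_add_right, hzero, inner_zero_right]
  rw [hPA₁, hPA₂, hPA₃]
  linarith
end

section
/- Let A1, A2, A3 be a scalene triangle in the Euclidean plane (all side lengths distinct). Then the set of points P with dist(P,A1)·dist(A2,A3) = dist(P,A2)·dist(A1,A3) = dist(P,A3)·dist(A1,A2) contains at most two points. -/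
/-!
Squaring, every solution `X` satisfies `a²|XA₁|² = b²|XA₂|² = c²|XA₃|²`, where `a, b, c` are the
sides opposite `A₁, A₂, A₃`. As `a ≠ b`, the first equation is an Apollonius circle. The weights
`a²(b² - c²), b²(c² - a²), c²(a² - b²)` sum to zero, so the corresponding combination of the squared
distances cancels `|X|²` and leaves an affine equation `⟪X, v⟫ = const`; as the vertices are affinely
independent and the last weight is nonzero, `v ≠ 0`, so the solutions lie on a line. A line meets a
circle in at most two points.
-/

open Module EuclideanGeometry

theorem weighted_sum_sq_eq_zero_of_mul_eq_mul {a b c x y z : ℝ} (hxy : x * a = y * b)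
    (hyz : y * b = z * c) :
    a ^ 2 * (b ^ 2 - c ^ 2) * x ^ 2 + b ^ 2 * (c ^ 2 - a ^ 2) * y ^ 2
      + c ^ 2 * (a ^ 2 - b ^ 2) * z ^ 2 = 0 := by
  linear_combination
    (b ^ 2 - c ^ 2) * (x * a + y * b) * hxy - (a ^ 2 - b ^ 2) * (y * b + z * c) * hyz

section InnerProductSpace

variable {V : Type*} [NormedAddCommGroup V] [InnerProductSpace ℝ V]

theorem sum_mul_norm_sub_sq_of_sum_eq_zero {ι : Type*} {s : Finset ι} {w : ι → ℝ}
    (hw : ∑ i ∈ s, w i = 0) (A : ι → V) (X : V) :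
    ∑ i ∈ s, w i * ‖X - A i‖ ^ 2 =
      ∑ i ∈ s, w i * ‖A i‖ ^ 2 - 2 * inner ℝ X (∑ i ∈ s, w i • A i) := by
  simp only [norm_sub_sq_real, mul_add, mul_sub, Finset.sum_add_distrib, Finset.sum_sub_distrib,
    ← Finset.sum_mul, hw, zero_mul, inner_sum, real_inner_smul_right, Finset.mul_sum,
    mul_left_comm (2 : ℝ)]
  ring

theorem inner_sub_sum_smul_eq_zero {ι : Type*} {s : Finset ι} {w : ι → ℝ}
    (hw : ∑ i ∈ s, w i = 0) {A : ι → V} {X Y : V}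
    (h : ∑ i ∈ s, w i * ‖X - A i‖ ^ 2 = ∑ i ∈ s, w i * ‖Y - A i‖ ^ 2) :
    inner ℝ (X - Y) (∑ i ∈ s, w i • A i) = 0 := by
  rw [sum_mul_norm_sub_sq_of_sum_eq_zero hw, sum_mul_norm_sub_sq_of_sum_eq_zero hw] at h
  rw [inner_sub_left]
  linarith

theorem collinear_of_inner_vsub_eq_zero {P : Type*} [MetricSpace P] [NormedAddTorsor V P]
    (hV : finrank ℝ V = 2) {v : V} (hv : v ≠ 0) {s : Set P}
    (hs : ∀ p ∈ s, ∀ q ∈ s, inner ℝ (p -ᵥ q) v = 0) : Collinear ℝ s := by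
  have : Fact (finrank ℝ V = 1 + 1) := ⟨hV⟩
  have : FiniteDimensional ℝ V := .of_fact_finrank_eq_succ 1
  rw [collinear_iff_finrank_le_one]
  calc finrank ℝ (vectorSpan ℝ s) ≤ finrank ℝ (ℝ ∙ v)ᗮ := by
        refine Submodule.finrank_mono ?_
        rw [vectorSpan_def, Submodule.span_le]
        rintro _ ⟨p, hp, q, hq, rfl⟩
        exact Submodule.mem_orthogonal_singleton_iff_inner_left.mpr (hs p hp q hq)
    _ = 1 := Submodule.finrank_orthogonal_span_singleton hv

theorem norm_sq_smul_sub_smul_eq_of_mul_norm_sq_eq {a b : ℝ} {A B X : V}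
    (h : a ^ 2 * ‖X - A‖ ^ 2 = b ^ 2 * ‖X - B‖ ^ 2) :
    ‖a ^ 2 • (X - A) - b ^ 2 • (X - B)‖ ^ 2 = (a * b * ‖A - B‖) ^ 2 := by
  have hAB : A - B = (X - B) - (X - A) := by abel
  rw [hAB, mul_pow, norm_sub_sq_real, norm_sub_sq_real]
  simp only [norm_smul, real_inner_smul_left, real_inner_smul_right, Real.norm_eq_abs,
    abs_of_nonneg (sq_nonneg a), abs_of_nonneg (sq_nonneg b), real_inner_comm (X - A)]
  linear_combination (a ^ 2 - b ^ 2) * h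

theorem cospherical_of_dist_mul_eq {a b : ℝ} (hab : a ^ 2 ≠ b ^ 2) {A B : V} {s : Set V}
    (hs : ∀ X ∈ s, dist X A * a = dist X B * b) : Cospherical s := by
  have hab' : a ^ 2 - b ^ 2 ≠ 0 := sub_ne_zero.mpr hab
  refine ⟨(a ^ 2 - b ^ 2)⁻¹ • (a ^ 2 • A - b ^ 2 • B), |a * b| * dist A B / |a ^ 2 - b ^ 2|,
    fun X hX => ?_⟩
  have hsq : a ^ 2 * ‖X - A‖ ^ 2 = b ^ 2 * ‖X - B‖ ^ 2 := by
    simp only [← dist_eq_norm, ← mul_pow, mul_comm _ (dist _ _), hs X hX]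
  have hcenter : (a ^ 2 - b ^ 2) • (X - (a ^ 2 - b ^ 2)⁻¹ • (a ^ 2 • A - b ^ 2 • B))
      = a ^ 2 • (X - A) - b ^ 2 • (X - B) := by
    rw [smul_sub, smul_smul, mul_inv_cancel₀ hab', one_smul, sub_smul, smul_sub, smul_sub]
    abel
  have hradius := (sq_eq_sq_iff_abs_eq_abs _ _).mp (norm_sq_smul_sub_smul_eq_of_mul_norm_sq_eq hsq)
  rw [abs_norm, abs_mul, abs_norm, ← hcenter, norm_smul, Real.norm_eq_abs, ← dist_eq_norm,
    ← dist_eq_norm] at hradius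
  rw [← hradius, mul_div_cancel_left₀ _ (abs_ne_zero.mpr hab')]

end InnerProductSpace

theorem at_most_two_isodynamic_points_general
    (A₁ A₂ A₃ : EuclideanSpace ℝ (Fin 2))
    (hA : AffineIndependent ℝ ![A₁, A₂, A₃])
    (hs₃ : dist A₁ A₃ ≠ dist A₂ A₃) :
    ∀ P ∈ {P : EuclideanSpace ℝ (Fin 2) |
        dist P A₁ * dist A₂ A₃ = dist P A₂ * dist A₁ A₃ ∧
        dist P A₂ * dist A₁ A₃ = dist P A₃ * dist A₁ A₂},
      ∀ Q ∈ {P : EuclideanSpace ℝ (Fin 2) |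
        dist P A₁ * dist A₂ A₃ = dist P A₂ * dist A₁ A₃ ∧
        dist P A₂ * dist A₁ A₃ = dist P A₃ * dist A₁ A₂},
      ∀ R ∈ {P : EuclideanSpace ℝ (Fin 2) |
        dist P A₁ * dist A₂ A₃ = dist P A₂ * dist A₁ A₃ ∧
        dist P A₂ * dist A₁ A₃ = dist P A₃ * dist A₁ A₂},
      P = Q ∨ P = R ∨ Q = R := by
  set S := {P : EuclideanSpace ℝ (Fin 2) |
    dist P A₁ * dist A₂ A₃ = dist P A₂ * dist A₁ A₃ ∧
    dist P A₂ * dist A₁ A₃ = dist P A₃ * dist A₁ A₂}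
  set a := dist A₂ A₃
  set b := dist A₁ A₃
  set c := dist A₁ A₂
  intro P hP Q hQ R hR
  have hPQR : {P, Q, R} ⊆ S := by simp [Set.insert_subset_iff, hP, hQ, hR]
  have hab : a ^ 2 ≠ b ^ 2 := fun h => hs₃ ((sq_eq_sq₀ dist_nonneg dist_nonneg).mp h).symm
  have hc : c ≠ 0 :=
    dist_ne_zero.mpr (by simpa using hA.injective.ne (by decide : (0 : Fin 3) ≠ 1))
  set w : Fin 3 → ℝ := ![a ^ 2 * (b ^ 2 - c ^ 2), b ^ 2 * (c ^ 2 - a ^ 2), c ^ 2 * (a ^ 2 - b ^ 2)]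
  have hw : ∑ i, w i = 0 := by
    simp only [Fin.sum_univ_three, w, Matrix.cons_val_zero, Matrix.cons_val_one, Matrix.cons_val]
    ring
  have hv : ∑ i, w i • ![A₁, A₂, A₃] i ≠ 0 := fun h =>
    mul_ne_zero (pow_ne_zero 2 hc) (sub_ne_zero.mpr hab)
      (hA.eq_zero_of_sum_eq_zero hw h 2 (Finset.mem_univ _))
  have hsol : ∀ X ∈ S, ∑ i, w i * ‖X - ![A₁, A₂, A₃] i‖ ^ 2 = 0 := by
    intro X hX
    obtain ⟨h₁₂, h₂₃⟩ : dist X A₁ * a = dist X A₂ * b ∧ dist X A₂ * b = dist X A₃ * c := hX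
    simp only [Fin.sum_univ_three, w, Matrix.cons_val_zero, Matrix.cons_val_one, Matrix.cons_val,
      ← dist_eq_norm]
    exact weighted_sum_sq_eq_zero_of_mul_eq_mul h₁₂ h₂₃
  have hcol : Collinear ℝ {P, Q, R} :=
    collinear_of_inner_vsub_eq_zero finrank_euclideanSpace_fin hv fun X hX Y hY =>
      inner_sub_sum_smul_eq_zero hw ((hsol X (hPQR hX)).trans (hsol Y (hPQR hY)).symm)
  have hsph : Cospherical {P, Q, R} :=
    cospherical_of_dist_mul_eq hab fun X hX => (hPQR hX).1
  by_contra! hne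
  exact affineIndependent_iff_not_collinear_set.mp
    (hsph.affineIndependent_of_ne hne.1 hne.2.1 hne.2.2) hcol

/-- A scalene triangle has at most two isodynamic points. -/
theorem at_most_two_isodynamic_points
    (A₁ A₂ A₃ : EuclideanSpace ℝ (Fin 2))
    (hA : AffineIndependent ℝ ![A₁, A₂, A₃])
    (hs₁ : dist A₁ A₂ ≠ dist A₁ A₃) (hs₂ : dist A₁ A₂ ≠ dist A₂ A₃)
    (hs₃ : dist A₁ A₃ ≠ dist A₂ A₃) :
    ∀ P ∈ {P : EuclideanSpace ℝ (Fin 2) |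
        dist P A₁ * dist A₂ A₃ = dist P A₂ * dist A₁ A₃ ∧
        dist P A₂ * dist A₁ A₃ = dist P A₃ * dist A₁ A₂},
      ∀ Q ∈ {P : EuclideanSpace ℝ (Fin 2) |
        dist P A₁ * dist A₂ A₃ = dist P A₂ * dist A₁ A₃ ∧
        dist P A₂ * dist A₁ A₃ = dist P A₃ * dist A₁ A₂},
      ∀ R ∈ {P : EuclideanSpace ℝ (Fin 2) |
        dist P A₁ * dist A₂ A₃ = dist P A₂ * dist A₁ A₃ ∧
        dist P A₂ * dist A₁ A₃ = dist P A₃ * dist A₁ A₂},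
      P = Q ∨ P = R ∨ Q = R :=
  at_most_two_isodynamic_points_general A₁ A₂ A₃ hA hs₃
end
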